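/- arXiv:2012.05145 — 2 statements merged into one kernel-verified Lean document; each statement's English description precedes it below -/
import Mathlib

section
/- For each vertex i of the k-th power of a cycle C_n^k (with k < n/2), define the path Q_i = v_0 v_1 ... v_k by v_0 = i and v_j = v_{j-1} + j (mod n) if j is odd, v_j = v_{j-1} - j (mod n) if j is even. Then the set {Q_i : i ∈ V(C_n^k)} is a decomposition of C_n^k into paths with k edges. -/
open SimpleGraph

/-- The `k`-th power of the cycle on `n` vertices. -/
def cyclePower (n k : ℕ) : SimpleGraph (ZMod n) where
  Adj x y := x ≠ y ∧ ∃ r : ℤ, r.natAbs ≤ k ∧ x - y = (r : ZMod n)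
  symm := by
    refine ⟨?_⟩
    rintro x y ⟨hxy, r, hr, h⟩
    exact ⟨hxy.symm, -r, by simpa using hr, by rw [Int.cast_neg, ← h, neg_sub]⟩
  loopless := by refine ⟨?_⟩; rintro x ⟨h, -⟩; exact h rfl

/-- The vertices `v_0, v_1, …` of the path `Q_i`: `v_0 = i`, and `v_j = v_{j-1} + j` if `j` is
odd, `v_j = v_{j-1} - j` if `j` is even (arithmetic in `ZMod n`). -/
def qvert (n : ℕ) (i : ZMod n) : ℕ → ZMod n
  | 0 => i
  | j + 1 => if (j + 1) % 2 = 1 then qvert n i j + ((j + 1 : ℕ) : ZMod n)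
             else qvert n i j - ((j + 1 : ℕ) : ZMod n)

/-!
Write `v_j = i + qoffset j`: the offsets `0, 1, -1, 2, -2, …` are distinct integers of absolute
value at most `k`, so `Q_i` is a path, and its edge `v_j v_{j+1}` has signed length
`qstep j = ±(j + 1)`. Hence an edge `xy` with `x - y ≡ ±d` (`1 ≤ d ≤ k`) can only be the edge
`v_{d-1} v_d` of some `Q_i`, and the position of its endpoints there determines `i`. Since
`2k < n`, integers differing by less than `n`, as all those in play do, are determined by their
residues mod `n`.
-/

def qstep (j : ℕ) : ℤ := if j % 2 = 0 then j + 1 else -(j + 1)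

def qoffset (j : ℕ) : ℤ := if j % 2 = 1 then (j + 1) / 2 else -(j / 2)

lemma natAbs_qstep (j : ℕ) : (qstep j).natAbs = j + 1 := by
  unfold qstep; split_ifs <;> omega

lemma natAbs_qoffset_le (j : ℕ) : (qoffset j).natAbs ≤ j := by
  unfold qoffset; split_ifs <;> omega

lemma qoffset_injective : Function.Injective qoffset := by
  intro j j' h
  unfold qoffset at h
  split_ifs at h <;> omega

lemma qoffset_succ (j : ℕ) : qoffset (j + 1) = qoffset j + qstep j := by
  unfold qoffset qstep; split_ifs <;> omega

lemma qvert_succ (n : ℕ) (i : ZMod n) (j : ℕ) :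
    qvert n i (j + 1) = qvert n i j + qstep j := by
  rw [qvert, qstep]
  split_ifs <;> first | omega | push_cast; ring

lemma qvert_eq_add_qoffset (n : ℕ) (i : ZMod n) (j : ℕ) : qvert n i j = i + qoffset j := by
  induction j with
  | zero => simp [qvert, qoffset]
  | succ j ih => rw [qvert_succ, ih, qoffset_succ]; push_cast; ring

lemma intCast_zmod_eq_iff_of_natAbs_sub_lt {n : ℕ} {a b : ℤ} (h : (a - b).natAbs < n) :
    (a : ZMod n) = b ↔ a = b := by
  rw [ZMod.intCast_eq_intCast_iff_dvd_sub]
  refine ⟨fun hdvd => ?_, fun hab => by rw [hab, sub_self]; exact dvd_zero _⟩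
  have := Int.eq_zero_of_dvd_of_natAbs_lt_natAbs hdvd (by omega)
  omega

lemma cyclePower_adj_add_intCast {n k : ℕ} (hkn : k < n) {r : ℤ} (hr : r ≠ 0)
    (hrk : r.natAbs ≤ k) (x : ZMod n) : (cyclePower n k).Adj (x + r) x := by
  refine ⟨fun hx => hr ?_, r, hrk, add_sub_cancel_left x _⟩
  have : (r : ZMod n) = ((0 : ℤ) : ZMod n) := by
    simpa using (add_eq_left.mp hx)
  exact (intCast_zmod_eq_iff_of_natAbs_sub_lt (by omega)).mp this

section

variable {n k : ℕ}

lemma nodup_map_qvert (hn : 2 * k < n) (i : ZMod n) :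
    ((List.range (k + 1)).map (qvert n i)).Nodup := by
  refine List.nodup_range.map_on fun j hj j' hj' hjj' => qoffset_injective ?_
  rw [List.mem_range] at hj hj'
  rw [qvert_eq_add_qoffset, qvert_eq_add_qoffset, add_right_inj] at hjj'
  have := natAbs_qoffset_le j
  have := natAbs_qoffset_le j'
  exact (intCast_zmod_eq_iff_of_natAbs_sub_lt (by omega)).mp hjj'

lemma qvert_adj_succ (hkn : k < n) (i : ZMod n) {j : ℕ} (hj : j < k) :
    (cyclePower n k).Adj (qvert n i j) (qvert n i (j + 1)) := by
  have hstep := natAbs_qstep j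
  rw [qvert_succ]
  exact (cyclePower_adj_add_intCast hkn (by omega) (by omega) _).symm

lemma exists_qvert_edge {e : Sym2 (ZMod n)} (he : e ∈ (cyclePower n k).edgeSet) :
    ∃ i : ZMod n, ∃ j < k, e = s(qvert n i j, qvert n i (j + 1)) := by
  induction e using Sym2.ind with
  | _ x y =>
  obtain ⟨hxy, r, hrk, hr⟩ := he
  have hr0 : r ≠ 0 := fun h => hxy (sub_eq_zero.mp (by rw [hr, h, Int.cast_zero]))
  have hstep := natAbs_qstep (r.natAbs - 1)
  -- `xy` is the edge `v_{|r|-1} v_{|r|}`, oriented by the sign of `qstep (|r| - 1)`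
  rcases Int.natAbs_eq_natAbs_iff.mp (hstep.trans (by omega : r.natAbs - 1 + 1 = r.natAbs))
    with hpos | hneg
  · refine ⟨y - qoffset (r.natAbs - 1), r.natAbs - 1, by omega, ?_⟩
    rw [qvert_succ, qvert_eq_add_qoffset, hpos, sub_add_cancel, ← hr, add_sub_cancel,
      Sym2.eq_swap]
  · refine ⟨x - qoffset (r.natAbs - 1), r.natAbs - 1, by omega, ?_⟩
    rw [qvert_succ, qvert_eq_add_qoffset, hneg, sub_add_cancel, Int.cast_neg, ← hr,
      ← sub_eq_add_neg, sub_sub_cancel]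

lemma qvert_edge_inj (hn : 2 * k < n) {i i' : ZMod n} {j j' : ℕ} (hj : j < k) (hj' : j' < k)
    (h : s(qvert n i j, qvert n i (j + 1)) = s(qvert n i' j', qvert n i' (j' + 1))) :
    i = i' ∧ j = j' := by
  have hstep := natAbs_qstep j
  have hstep' := natAbs_qstep j'
  rw [qvert_succ, qvert_succ, Sym2.eq_iff] at h
  rcases h with ⟨hv, hw⟩ | ⟨hv, hw⟩
  · rw [hv, add_right_inj, intCast_zmod_eq_iff_of_natAbs_sub_lt (by omega)] at hw
    obtain rfl : j = j' := by omega
    rw [qvert_eq_add_qoffset, qvert_eq_add_qoffset, add_left_inj] at hv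
    exact ⟨hv, rfl⟩
  · have hsum : ((qstep j + qstep j' : ℤ) : ZMod n) = ((0 : ℤ) : ZMod n) := by
      push_cast
      linear_combination hw - hv
    rw [intCast_zmod_eq_iff_of_natAbs_sub_lt (by omega)] at hsum
    obtain rfl : j = j' := by omega
    omega

end

theorem stmt_4_general (n k : ℕ) (hn : 2 * k < n) :
    (∀ i : ZMod n,
      ((List.range (k + 1)).map (qvert n i)).Nodup ∧
      ∀ j < k, (cyclePower n k).Adj (qvert n i j) (qvert n i (j + 1))) ∧
    (∀ e ∈ (cyclePower n k).edgeSet,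
      ∃! p : ZMod n × ℕ, p.2 < k ∧ e = s(qvert n p.1 p.2, qvert n p.1 (p.2 + 1))) := by
  refine ⟨fun i => ⟨nodup_map_qvert hn i, fun j hj => qvert_adj_succ (by omega) i hj⟩,
    fun e he => ?_⟩
  obtain ⟨i, j, hj, rfl⟩ := exists_qvert_edge he
  refine ⟨(i, j), ⟨hj, rfl⟩, fun ⟨i', j'⟩ ⟨hj', h⟩ => ?_⟩
  obtain ⟨rfl, rfl⟩ := qvert_edge_inj hn hj' hj h.symm
  rfl

/-- For each vertex `i` of `C_n^k` (with `k < n/2`), the walk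
`Q_i = v_0 v_1 ⋯ v_k` given by `qvert` is a path with `k` edges, and the set
`{Q_i : i ∈ V(C_n^k)}` is a decomposition of `C_n^k`: every edge of `C_n^k` is an edge of
exactly one `Q_i` (at exactly one position). -/
theorem stmt_4 (n k : ℕ) (hk : 0 < k) (hn : 2 * k < n) :
    (∀ i : ZMod n,
      ((List.range (k + 1)).map (qvert n i)).Nodup ∧
      ∀ j < k, (cyclePower n k).Adj (qvert n i j) (qvert n i (j + 1))) ∧
    (∀ e ∈ (cyclePower n k).edgeSet,
      ∃! p : ZMod n × ℕ, p.2 < k ∧ e = s(qvert n p.1 p.2, qvert n p.1 (p.2 + 1))) :=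
  stmt_4_general n k hn
end

section
/- Every 5-regular graph G that contains a spanning Cayley graph X(Γ, {g,-g,r,-r}) where {g,r} is a simple commutative generator satisfying 2g+2r = 0 and 2g-2r = 0, admits an M_{g,r}-centered P_5-decomposition, where M_{g,r} = E(G) \ E(X). -/
/-!
The relations give `4g = 0` and `2(-g + r) = 0`, and the remaining hypotheses make
`(i, j) ↦ i • g + j • (-g + r)` an embedding of `ZMod 4 × ZMod 2` into `Γ` with `(1, 0) ↦ g` and
`(1, 1) ↦ r`. So `X` is the graph of a free action of `ZMod 4 × ZMod 2` with edges along `±(1, 0)`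
and `±(1, 1)`, and the edges of `G` outside `X` pair the vertices by an involution `m`.

The path through the matching edge `u m(u)` is `w(u), v(u), u, m(u), v(m u), w(m u)`, where
`v(u) = ±g + u` and `w(u) = ±r + v(u)`. Taking the first sign constant along the cycles of `g` and
the second constant along the cycles of `r` makes the arms `u v(u)` and `v(u) w(u)` partition
`E(X)`. The translation from `u` to `w(u)` is then `(2, 1)` or `(0, 1)`, according to whether the
signs agree, and the six vertices are distinct unless `w(u) = m(u)`. Both translations preserve
the parity of the first coordinate, and such a parity class of an orbit (a diagonal) never
contains matching edges along both of them; so the signs can be chosen, diagonal by diagonal,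
to avoid the translation along which `m` moves `u`.
-/

open SimpleGraph

/-- The Cayley graph `X(Γ, S)`. -/
def cayleyGraph {Γ : Type*} [AddGroup Γ] (S : Set Γ) : SimpleGraph Γ where
  Adj x y := x ≠ y ∧ (y - x ∈ S ∨ x - y ∈ S)
  symm := by constructor; rintro x y ⟨h, h'⟩; exact ⟨h.symm, h'.symm⟩
  loopless := by constructor; rintro x ⟨h, -⟩; exact h rfl

open Function

section CenteredDecomposition

variable {V : Type*}

def IsCenteredP5Decomposition (G : SimpleGraph V) (M : Set (Sym2 V))
    (D : Set (Σ u v : V, G.Walk u v)) : Prop :=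
  (∀ T ∈ D, T.2.2.IsPath ∧ T.2.2.length = 5 ∧ ∃ e ∈ M, T.2.2.edges[2]? = some e) ∧
    ∀ e ∈ G.edgeSet, ∃! T, T ∈ D ∧ e ∈ T.2.2.edges

structure IsComplementMatching (G X : SimpleGraph V) (m : V → V) : Prop where
  adj : ∀ v, G.Adj v (m v)
  not_adj : ∀ v, ¬X.Adj v (m v)
  eq_of_adj : ∀ {v w}, G.Adj v w → ¬X.Adj v w → w = m v

variable {G X : SimpleGraph V} {m : V → V}

theorem IsComplementMatching.involutive (hm : IsComplementMatching G X m) : Involutive m :=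
  fun v => (hm.eq_of_adj (hm.adj v).symm fun h => hm.not_adj v h.symm).symm

theorem exists_isComplementMatching [Finite V] (hXG : X ≤ G)
    (hdeg : ∀ v, (G.neighborSet v).ncard = (X.neighborSet v).ncard + 1) :
    ∃ m, IsComplementMatching G X m := by
  have h : ∀ v, ∃ w, G.neighborSet v \ X.neighborSet v = {w} := fun v => by
    rw [← Set.ncard_eq_one, Set.ncard_sdiff (s := X.neighborSet v) (t := G.neighborSet v)
      (fun w h => hXG h), hdeg, Nat.add_sub_cancel_left]
  choose m hm using h
  have hmem : ∀ v w, G.Adj v w ∧ ¬X.Adj v w ↔ w = m v := fun v w => Set.ext_iff.mp (hm v) w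
  exact ⟨m, fun v => ((hmem v _).2 rfl).1, fun v => ((hmem v _).2 rfl).2,
    fun hG hX => (hmem _ _).1 ⟨hG, hX⟩⟩

def armEdge (near far : V → V) : V × Bool → Sym2 V
  | (u, false) => s(u, near u)
  | (u, true) => s(near u, far u)

section CenteredWalk

variable {near far : V → V} (hXG : X ≤ G) (hm : IsComplementMatching G X m)
  (hnear : ∀ u, X.Adj u (near u)) (hfar : ∀ u, X.Adj (near u) (far u))

def centeredWalk (u : V) : G.Walk (far u) (far (m u)) :=
  .cons (hXG (hfar u).symm) <| .cons (hXG (hnear u).symm) <| .cons (hm.adj u) <|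
    .cons (hXG (hnear (m u))) <| .cons (hXG (hfar (m u))) .nil

theorem mem_edges_centeredWalk {u : V} {e : Sym2 V} :
    e ∈ (centeredWalk hXG hm hnear hfar u).edges ↔
      e = s(u, m u) ∨ (∃ b, e = armEdge near far (u, b)) ∨ ∃ b, e = armEdge near far (m u, b) := by
  simp only [centeredWalk, Walk.edges_cons, Walk.edges_nil, List.mem_cons, List.not_mem_nil,
    or_false, Bool.exists_bool, armEdge, Sym2.eq_swap (a := far u),
    Sym2.eq_swap (a := near u) (b := u)]
  tauto

theorem mem_edges_centeredWalk_apply {u : V} {e : Sym2 V} :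
    e ∈ (centeredWalk hXG hm hnear hfar (m u)).edges ↔
      e ∈ (centeredWalk hXG hm hnear hfar u).edges := by
  rw [mem_edges_centeredWalk, mem_edges_centeredWalk, hm.involutive u, Sym2.eq_swap (a := m u)]
  tauto

theorem mk_eq_mk_of_mem_edges_centeredWalk (harm : Injective (armEdge near far)) {u w : V}
    {e : Sym2 V} (hu : e ∈ (centeredWalk hXG hm hnear hfar u).edges)
    (hw : e ∈ (centeredWalk hXG hm hnear hfar w).edges) : s(u, m u) = s(w, m w) := by
  have hcenter : ∀ v p, s(v, m v) ≠ armEdge near far p := by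
    rintro v ⟨w, _ | _⟩ h
    exacts [hm.not_adj v (by rw [← X.mem_edgeSet, h]; exact hnear w),
      hm.not_adj v (by rw [← X.mem_edgeSet, h]; exact hfar w)]
  have harm_eq : ∀ {v w b b'}, armEdge near far (v, b) = armEdge near far (w, b') → v = w :=
    fun h => congrArg Prod.fst (harm h)
  have hswap : ∀ v, s(m v, m (m v)) = s(v, m v) := fun v => by
    rw [hm.involutive v, Sym2.eq_swap]
  rw [mem_edges_centeredWalk] at hu hw
  rcases hu with rfl | ⟨b, rfl⟩ | ⟨b, rfl⟩ <;> rcases hw with h | ⟨b', h⟩ | ⟨b', h⟩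
  · exact h
  · exact absurd h (hcenter _ _)
  · exact absurd h (hcenter _ _)
  · exact absurd h.symm (hcenter _ _)
  · rw [harm_eq h]
  · rw [harm_eq h, hswap]
  · exact absurd h.symm (hcenter _ _)
  · rw [← harm_eq h, hswap]
  · rw [hm.involutive.injective (harm_eq h)]

end CenteredWalk

theorem exists_isCenteredP5Decomposition {near far : V → V} (hXG : X ≤ G)
    (hm : IsComplementMatching G X m) (hnear : ∀ u, X.Adj u (near u))
    (hfar : ∀ u, X.Adj (near u) (far u)) (harm : Injective (armEdge near far))
    (harm_surj : ∀ e ∈ X.edgeSet, ∃ p, armEdge near far p = e)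
    (hnodup : ∀ u, [far u, near u, u, m u, near (m u), far (m u)].Nodup) :
    ∃ D, IsCenteredP5Decomposition G (G.edgeSet \ X.edgeSet) D := by
  let W := centeredWalk hXG hm hnear hfar
  -- one walk per matching edge, started at an arbitrary end of it
  let P : Sym2 V → Σ a b : V, G.Walk a b := fun e => ⟨_, _, W e.out.1⟩
  have hP : ∀ u e, e ∈ (P s(u, m u)).2.2.edges ↔ e ∈ (W u).edges := by
    intro u e
    rcases Sym2.mem_iff.mp (Sym2.out_fst_mem s(u, m u)) with h | h
    · change e ∈ (W (Quot.out s(u, m u)).1).edges ↔ _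
      rw [h]
    · change e ∈ (W (Quot.out s(u, m u)).1).edges ↔ _
      rw [h, mem_edges_centeredWalk_apply]
  refine ⟨Set.range fun u => P s(u, m u), ?_, fun e he => ?_⟩
  · rintro _ ⟨u, rfl⟩
    set x := (s(u, m u)).out.1
    exact ⟨Walk.isPath_def _ |>.mpr (hnodup x), rfl, s(x, m x), ⟨hm.adj x, hm.not_adj x⟩, rfl⟩
  · obtain ⟨u, heu⟩ : ∃ u, e ∈ (W u).edges := by
      induction e using Sym2.ind with | h v w => ?_
      by_cases hX : X.Adj v w
      · obtain ⟨⟨u, b⟩, hu⟩ := harm_surj s(v, w) hX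
        exact ⟨u, mem_edges_centeredWalk _ _ _ _ |>.2 (Or.inr (Or.inl ⟨b, hu.symm⟩))⟩
      · exact ⟨v, mem_edges_centeredWalk _ _ _ _ |>.2
          (Or.inl (by rw [hm.eq_of_adj (w := w) he hX]))⟩
    refine ⟨P s(u, m u), ⟨⟨u, rfl⟩, (hP u e).2 heu⟩, ?_⟩
    rintro _ ⟨⟨w, rfl⟩, hw⟩
    exact congrArg P (mk_eq_mk_of_mem_edges_centeredWalk _ _ _ _ harm ((hP w e).1 hw) heu)

end CenteredDecomposition

section OrbitCoordinates

variable (A : Type*) (V : Type*) [AddGroup A] [AddAction A V]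

def IsFreeAction : Prop := ∀ u : V, Injective fun p : A => p +ᵥ u

variable {V}

noncomputable def orbitBase (u : V) : V := (Quotient.mk (AddAction.orbitRel A V) u).out

theorem exists_vadd_orbitBase (u : V) : ∃ p : A, p +ᵥ orbitBase A u = u :=
  AddAction.mem_orbit_iff.mp <|
    (AddAction.orbitRel A V).iseqv.symm (Quotient.mk_out (s := AddAction.orbitRel A V) u)

noncomputable def orbitCoord (u : V) : A := (exists_vadd_orbitBase A u).choose

variable {A}

theorem orbitCoord_vadd_orbitBase (u : V) : orbitCoord A u +ᵥ orbitBase A u = u :=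
  (exists_vadd_orbitBase A u).choose_spec

theorem orbitBase_vadd (p : A) (u : V) : orbitBase A (p +ᵥ u) = orbitBase A u :=
  congrArg Quotient.out (Quotient.sound (AddAction.mem_orbit u p))

theorem orbitCoord_vadd (hfree : IsFreeAction A V) (p : A) (u : V) :
    orbitCoord A (p +ᵥ u) = p + orbitCoord A u :=
  hfree (orbitBase A u) <| calc
    orbitCoord A (p +ᵥ u) +ᵥ orbitBase A u = p +ᵥ u := by
      rw [← orbitBase_vadd p u, orbitCoord_vadd_orbitBase]
    _ = (p + orbitCoord A u) +ᵥ orbitBase A u := by rw [add_vadd, orbitCoord_vadd_orbitBase]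

theorem eq_sub_vadd_of_orbitBase_eq {u v : V} (h : orbitBase A v = orbitBase A u) :
    v = (orbitCoord A v - orbitCoord A u) +ᵥ u := calc
  v = orbitCoord A v +ᵥ orbitBase A u := by rw [← h, orbitCoord_vadd_orbitBase]
  _ = (orbitCoord A v - orbitCoord A u) +ᵥ (orbitCoord A u +ᵥ orbitBase A u) := by
    rw [vadd_vadd, sub_add_cancel]
  _ = (orbitCoord A v - orbitCoord A u) +ᵥ u := by rw [orbitCoord_vadd_orbitBase]

theorem eq_neg_add_vadd_of_vadd_eq {p q : A} {u v : V} (h : p +ᵥ u = q +ᵥ v) :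
    v = (-q + p) +ᵥ u := by
  rw [← vadd_vadd, h, neg_vadd_vadd]

theorem vadd_ne_self (hfree : IsFreeAction A V) {p : A} (hp : p ≠ 0)
    (u : V) : p +ᵥ u ≠ u :=
  fun h => hp (((hfree u).eq_iff' (zero_vadd A u)).mp h)

theorem mk_vadd_eq_mk_vadd (hfree : IsFreeAction A V) {u u' : V}
    {p p' : A} (h : s(u, p +ᵥ u) = s(u', p' +ᵥ u')) :
    (u' = u ∧ p' = p) ∨ (u' = p +ᵥ u ∧ p' + p = 0) := by
  rcases Sym2.eq_iff.mp h with ⟨rfl, h⟩ | ⟨h₁, h₂⟩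
  · exact Or.inl ⟨rfl, (hfree u h).symm⟩
  · refine Or.inr ⟨h₂.symm, hfree u ?_⟩
    simp only [add_vadd, h₂, ← h₁, zero_vadd]

end OrbitCoordinates

section Signed

variable {A V : Type*} [AddGroup A] [AddAction A V]

def signed (b : ZMod 2) (p : A) : A := if b = 0 then p else -p

theorem signed_add_one (b : ZMod 2) (p : A) : signed (b + 1) p = -signed b p := by
  rcases (by decide : ∀ c : ZMod 2, c = 0 ∨ c = 1) b with rfl | rfl
  · simp [signed]
  · simp [signed, show (1 : ZMod 2) + 1 = 0 from rfl]

theorem injective_mk_signed_vadd (hfree : IsFreeAction A V) {p : A}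
    (hp : p + p ≠ 0) {σ : V → ZMod 2} (hσ : ∀ b u, σ (signed b p +ᵥ u) = σ u) :
    Injective fun u => s(u, signed (σ u) p +ᵥ u) := by
  intro u u' h
  rcases mk_vadd_eq_mk_vadd hfree h with ⟨h, -⟩ | ⟨rfl, h⟩
  · exact h.symm
  · rw [hσ] at h
    unfold signed at h
    split_ifs at h
    · exact absurd h hp
    · rw [← neg_add_rev, neg_eq_zero] at h
      exact absurd h hp

theorem exists_mk_signed_vadd_eq {p : A} {σ : V → ZMod 2}
    (hσ : ∀ b u, σ (signed b p +ᵥ u) = σ u) (u : V) (b : ZMod 2) :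
    ∃ w, s(w, signed (σ w) p +ᵥ w) = s(u, signed b p +ᵥ u) := by
  by_cases hb : σ u = b
  · exact ⟨u, by rw [hb]⟩
  · have hσu : σ u = b + 1 := by
      revert hb; generalize σ u = c; revert c b; decide
    refine ⟨signed b p +ᵥ u, ?_⟩
    rw [hσ, hσu, signed_add_one, vadd_vadd, neg_add_cancel, zero_vadd, Sym2.eq_swap]

end Signed

namespace CenteredPaths

local notation "𝔸" => ZMod 4 × ZMod 2

def parity : ZMod 4 →+* ZMod 2 := ZMod.castHom (by norm_num) _

def gens : Finset 𝔸 := {(1, 0), -(1, 0), (1, 1), -(1, 1)}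

theorem mem_gens {p : 𝔸} : p ∈ gens ↔ ∃ b, p = signed b (1, 0) ∨ p = signed b (1, 1) := by
  revert p; decide

variable {V : Type*} [AddAction 𝔸 V] {m : V → V}

open Classical in
noncomputable def diagBit (m : V → V) (x : V) (q : ZMod 2) : ZMod 2 :=
  if ∃ v, orbitBase 𝔸 v = x ∧ parity (orbitCoord 𝔸 v).1 = q ∧ m v = ((2, 1) : 𝔸) +ᵥ v then 1 else 0

noncomputable def diag (m : V → V) (u : V) : ZMod 2 :=
  diagBit m (orbitBase 𝔸 u) (parity (orbitCoord 𝔸 u).1)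

-- The two signs are tuned so that `gSign m u + rSign m (near m u) = diag m u`.
noncomputable def gSign (m : V → V) (u : V) : ZMod 2 :=
  (orbitCoord 𝔸 u).2 * (diagBit m (orbitBase 𝔸 u) 0 + diagBit m (orbitBase 𝔸 u) 1)

noncomputable def rSign (m : V → V) (y : V) : ZMod 2 :=
  diagBit m (orbitBase 𝔸 y) (parity (orbitCoord 𝔸 y).1 + (orbitCoord 𝔸 y).2 + 1)

noncomputable def near (m : V → V) (u : V) : V := signed (gSign m u) ((1, 0) : 𝔸) +ᵥ u

noncomputable def far (m : V → V) (u : V) : V :=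
  signed (rSign m (near m u)) ((1, 1) : 𝔸) +ᵥ near m u

def farStep (c : ZMod 2) : 𝔸 := if c = 0 then (2, 1) else (0, 1)

theorem gSign_vadd (hfree : IsFreeAction 𝔸 V) {p : 𝔸} (hp : p.2 = 0)
    (u : V) : gSign m (p +ᵥ u) = gSign m u := by
  simp only [gSign, orbitBase_vadd, orbitCoord_vadd hfree, Prod.snd_add, hp, zero_add]

theorem rSign_vadd (hfree : IsFreeAction 𝔸 V) {p : 𝔸}
    (hp : parity p.1 + p.2 = 0) (y : V) : rSign m (p +ᵥ y) = rSign m y := by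
  simp only [rSign, orbitBase_vadd, orbitCoord_vadd hfree, Prod.fst_add, Prod.snd_add, map_add]
  congr 1
  linear_combination hp

theorem diag_vadd (hfree : IsFreeAction 𝔸 V) {p : 𝔸}
    (hp : parity p.1 = 0) (u : V) : diag m (p +ᵥ u) = diag m u := by
  simp only [diag, orbitBase_vadd, orbitCoord_vadd hfree, Prod.fst_add, map_add, hp, zero_add]

theorem gSign_signed_vadd (hfree : IsFreeAction 𝔸 V) (b : ZMod 2)
    (u : V) : gSign m (signed b ((1, 0) : 𝔸) +ᵥ u) = gSign m u :=
  gSign_vadd hfree (by revert b; decide) u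

theorem rSign_signed_vadd (hfree : IsFreeAction 𝔸 V) (b : ZMod 2)
    (y : V) : rSign m (signed b ((1, 1) : 𝔸) +ᵥ y) = rSign m y :=
  rSign_vadd hfree (by revert b; decide) y

theorem gSign_add_rSign_near (hfree : IsFreeAction 𝔸 V) (u : V) :
    gSign m u + rSign m (near m u) = diag m u := by
  have key : ∀ (f : ZMod 2 → ZMod 2) (q j : ZMod 2), j * (f 0 + f 1) + f (1 + q + j + 1) = f q := by
    decide
  have h₁ : ∀ b : ZMod 2, parity (signed b ((1, 0) : 𝔸)).1 = 1 := by decide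
  have h₂ : ∀ b : ZMod 2, (signed b ((1, 0) : 𝔸)).2 = 0 := by decide
  simp only [rSign, near, orbitBase_vadd, orbitCoord_vadd hfree, Prod.fst_add, Prod.snd_add,
    map_add, h₁, h₂, zero_add, gSign, diag]
  exact key _ _ _

theorem far_eq (hfree : IsFreeAction 𝔸 V) (u : V) :
    far m u = farStep (diag m u) +ᵥ u := by
  have key : ∀ b c : ZMod 2, signed c ((1, 1) : 𝔸) + signed b (1, 0) = farStep (b + c) := by
    decide
  have h : far m u =
      (signed (rSign m (near m u)) ((1, 1) : 𝔸) + signed (gSign m u) (1, 0)) +ᵥ u := by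
    rw [← vadd_vadd]; rfl
  rw [h, key, gSign_add_rSign_near hfree]

theorem diag_eq_one_of_apply_eq {u : V} (h : m u = ((2, 1) : 𝔸) +ᵥ u) : diag m u = 1 := by
  unfold diag diagBit
  exact if_pos ⟨u, rfl, rfl, h⟩

theorem diag_eq_zero_of_apply_eq (hfree : IsFreeAction 𝔸 V)
    (hm : Involutive m) {u : V} (h : m u = ((0, 1) : 𝔸) +ᵥ u) : diag m u = 0 := by
  unfold diag diagBit
  refine if_neg ?_
  rintro ⟨v, hbase, hpar, hv⟩
  set k := orbitCoord 𝔸 v - orbitCoord 𝔸 u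
  have hk : parity k.1 = 0 := by simp only [k, Prod.fst_sub, map_sub, hpar, sub_self]
  rw [eq_sub_vadd_of_orbitBase_eq hbase, vadd_vadd] at hv
  have e₁ : k +ᵥ u = u ↔ m (k +ᵥ u) = m u := hm.injective.eq_iff.symm
  have e₂ : k +ᵥ u = m u ↔ m (k +ᵥ u) = u := hm.eq_iff.symm
  rw [h, hv, (hfree u).eq_iff' (zero_vadd _ u), (hfree u).eq_iff] at e₁
  rw [h, hv, (hfree u).eq_iff' (zero_vadd _ u), (hfree u).eq_iff] at e₂
  -- `m` would match `u` along `(0, 1)` and `v` along `(2, 1)`, both inside the diagonal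
  -- `{0, (0, 1), (2, 0), (2, 1)} +ᵥ u`: no `k` is compatible with both matching edges.
  have conflict : ∀ k : 𝔸, parity k.1 = 0 → (k = 0 ↔ (2, 1) + k = (0, 1)) →
      (k = (0, 1) ↔ (2, 1) + k = 0) → False := by
    decide
  exact conflict k hk e₁ e₂

theorem far_ne_apply (hfree : IsFreeAction 𝔸 V) (hm : Involutive m)
    (u : V) : far m u ≠ m u := by
  rw [far_eq hfree, farStep]
  split_ifs with hd <;> intro h
  · exact one_ne_zero ((diag_eq_one_of_apply_eq h.symm).symm.trans hd)
  · exact hd (diag_eq_zero_of_apply_eq hfree hm h.symm)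

theorem far_ne_self (hfree : IsFreeAction 𝔸 V) (u : V) : far m u ≠ u := by
  rw [far_eq hfree]
  exact vadd_ne_self hfree (by unfold farStep; split_ifs <;> decide) u

theorem near_injective (hfree : IsFreeAction 𝔸 V) : Injective (near m) := by
  intro u v h
  have hv := eq_neg_add_vadd_of_vadd_eq h
  have hs : ∀ b c : ZMod 2, (-signed c ((1, 0) : 𝔸) + signed b (1, 0)).2 = 0 := by decide
  have hg : gSign m v = gSign m u := by rw [hv, gSign_vadd hfree (hs _ _)]
  unfold near at h
  rw [hg] at h
  exact AddAction.injective _ h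

theorem far_injective (hfree : IsFreeAction 𝔸 V) : Injective (far m) := by
  intro u v h
  rw [far_eq hfree, far_eq hfree] at h
  have hv := eq_neg_add_vadd_of_vadd_eq h
  have hs : ∀ c c' : ZMod 2, parity (-farStep c' + farStep c).1 = 0 := by decide
  have hd : diag m v = diag m u := by rw [hv, diag_vadd hfree (hs _ _)]
  rw [hd] at h
  exact AddAction.injective _ h

variable {G X : SimpleGraph V}

theorem adj_near (hX : ∀ u v, X.Adj u v ↔ ∃ p ∈ gens, v = p +ᵥ u) (u : V) :
    X.Adj u (near m u) :=
  (hX _ _).2 ⟨_, mem_gens.2 ⟨_, Or.inl rfl⟩, rfl⟩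

theorem adj_far (hX : ∀ u v, X.Adj u v ↔ ∃ p ∈ gens, v = p +ᵥ u) (u : V) :
    X.Adj (near m u) (far m u) :=
  (hX _ _).2 ⟨_, mem_gens.2 ⟨_, Or.inr rfl⟩, rfl⟩

theorem adj_of_far_eq_near (hX : ∀ u v, X.Adj u v ↔ ∃ p ∈ gens, v = p +ᵥ u)
    (hfree : IsFreeAction 𝔸 V) {u v : V} (h : far m u = near m v) :
    X.Adj u v := by
  have key : ∀ b c, -signed b ((1, 0) : 𝔸) + farStep c ∈ gens := by decide
  rw [far_eq hfree, near] at h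
  exact (hX u v).2 ⟨_, key _ _, eq_neg_add_vadd_of_vadd_eq h⟩

theorem armEdge_injective (hfree : IsFreeAction 𝔸 V) :
    Injective (armEdge (near m) (far m)) := by
  have hg := injective_mk_signed_vadd hfree (p := ((1, 0) : 𝔸)) (by decide)
    (gSign_signed_vadd (m := m) hfree)
  have hr := (injective_mk_signed_vadd hfree (p := ((1, 1) : 𝔸)) (by decide)
    (rSign_signed_vadd (m := m) hfree)).comp (near_injective (m := m) hfree)
  have hgr : ∀ u v, s(u, near m u) ≠ s(near m v, far m v) := by
    have key : ∀ b c : ZMod 2,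
        signed c ((1, 1) : 𝔸) ≠ signed b (1, 0) ∧ signed c ((1, 1) : 𝔸) + signed b (1, 0) ≠ 0 := by
      decide
    intro u v h
    rcases mk_vadd_eq_mk_vadd hfree h with ⟨-, h⟩ | ⟨-, h⟩
    exacts [(key _ _).1 h, (key _ _).2 h]
  rintro ⟨u, _ | _⟩ ⟨v, _ | _⟩ h
  · rw [hg h]
  · exact absurd h (hgr u v)
  · exact absurd h.symm (hgr v u)
  · rw [hr h]

theorem exists_armEdge_eq [Finite V] (hX : ∀ u v, X.Adj u v ↔ ∃ p ∈ gens, v = p +ᵥ u)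
    (hfree : IsFreeAction 𝔸 V) {e : Sym2 V} (he : e ∈ X.edgeSet) :
    ∃ p, armEdge (near m) (far m) p = e := by
  induction e using Sym2.ind with | h u v => ?_
  obtain ⟨p, hp, rfl⟩ := (hX u v).1 he
  obtain ⟨b, rfl | rfl⟩ := mem_gens.1 hp
  · obtain ⟨w, hw⟩ := exists_mk_signed_vadd_eq (gSign_signed_vadd (m := m) hfree) u b
    exact ⟨(w, false), hw⟩
  · obtain ⟨y, hy⟩ := exists_mk_signed_vadd_eq (rSign_signed_vadd (m := m) hfree) u b
    obtain ⟨w, rfl⟩ := Finite.surjective_of_injective (near_injective (m := m) hfree) y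
    exact ⟨(w, true), hy⟩

theorem nodup_path (hX : ∀ u v, X.Adj u v ↔ ∃ p ∈ gens, v = p +ᵥ u)
    (hfree : IsFreeAction 𝔸 V) (hm : IsComplementMatching G X m) (u : V) :
    [far m u, near m u, u, m u, near m (m u), far m (m u)].Nodup := by
  have H : ∀ v, far m v ≠ near m v ∧ far m v ≠ v ∧ far m v ≠ m v ∧ far m v ≠ near m (m v) ∧
      near m v ≠ v ∧ near m v ≠ m v ∧ v ≠ m v := fun v =>
    ⟨(adj_far hX v).ne', far_ne_self hfree v, far_ne_apply hfree hm.involutive v,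
      fun h => hm.not_adj v (adj_of_far_eq_near hX hfree h), (adj_near hX v).ne',
      fun h => hm.not_adj v (h ▸ adj_near hX v), (hm.adj v).ne⟩
  obtain ⟨f₁, f₂, f₃, f₄, n₁, n₂, hu⟩ := H u
  obtain ⟨f₁', f₂', f₃', f₄', n₁', n₂', -⟩ := H (m u)
  rw [hm.involutive u] at f₃' f₄' n₂'
  have hn := (near_injective (m := m) hfree).ne hu
  have hf := (far_injective (m := m) hfree).ne hu
  simp only [List.nodup_cons, List.mem_cons, List.not_mem_nil, or_false, List.nodup_nil,
    not_false_eq_true, and_true, not_or]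
  exact ⟨⟨f₁, f₂, f₃, f₄, hf⟩, ⟨n₁, n₂, hn, f₄'.symm⟩, ⟨hu, n₂'.symm, f₃'.symm⟩,
    ⟨n₁'.symm, f₂'.symm⟩, f₁'.symm⟩

theorem ncard_neighborSet (hX : ∀ u v, X.Adj u v ↔ ∃ p ∈ gens, v = p +ᵥ u)
    (hfree : IsFreeAction 𝔸 V) (u : V) : (X.neighborSet u).ncard = 4 := by
  have h : X.neighborSet u = (· +ᵥ u) '' (gens : Set 𝔸) := by
    ext v
    simp only [mem_neighborSet, hX, Set.mem_image, Finset.mem_coe, eq_comm]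
  rw [h, Set.ncard_image_of_injective _ (hfree u), Set.ncard_coe_finset]
  rfl

theorem exists_isCenteredP5Decomposition_of_free [Finite V]
    (hfree : IsFreeAction 𝔸 V)
    (hX : ∀ u v, X.Adj u v ↔ ∃ p ∈ gens, v = p +ᵥ u) (hXG : X ≤ G)
    (hdeg : ∀ v, (G.neighborSet v).ncard = 5) :
    ∃ D, IsCenteredP5Decomposition G (G.edgeSet \ X.edgeSet) D := by
  obtain ⟨m, hm⟩ := exists_isComplementMatching hXG fun v => by
    rw [hdeg, ncard_neighborSet hX hfree]
  exact exists_isCenteredP5Decomposition hXG hm (adj_near hX) (adj_far hX)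
    (armEdge_injective hfree) (fun e he => exists_armEdge_eq hX hfree he) (nodup_path hX hfree hm)

end CenteredPaths

section Coordinates

variable {Γ : Type*} [AddGroup Γ]

theorem cayleyGraph_adj_iff {S : Set Γ} (hS : ∀ x ∈ S, -x ∈ S) (h0 : (0 : Γ) ∉ S) {u v : Γ} :
    (cayleyGraph S).Adj u v ↔ v - u ∈ S := by
  refine ⟨fun ⟨_, h⟩ => h.elim id fun h => by simpa using hS _ h, fun h => ⟨?_, Or.inl h⟩⟩
  rintro rfl
  exact h0 (by simpa using h)

theorem cayleyGraph_image_adj_iff {A : Type*} [AddGroup A] {φ : A →+ Γ} (hφ : Injective φ)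
    {s : Set A} (hs : ∀ p ∈ s, -p ∈ s) (h0 : (0 : A) ∉ s) {u v : Γ} :
    (cayleyGraph (φ '' s)).Adj u v ↔ ∃ p ∈ s, v = φ p + u := by
  rw [cayleyGraph_adj_iff]
  · simp only [Set.mem_image, ← sub_eq_iff_eq_add, eq_comm]
  · rintro _ ⟨p, hp, rfl⟩
    exact ⟨-p, hs p hp, map_neg φ p⟩
  · rintro ⟨p, hp, h⟩
    exact h0 (hφ (h.trans (map_zero φ).symm) ▸ hp)

theorem exists_addMonoidHom_zmod_prod {m n : ℕ} {g t : Γ} (hgt : AddCommute g t)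
    (hg : (m : ℤ) • g = 0) (ht : (n : ℤ) • t = 0) :
    ∃ φ : ZMod m × ZMod n →+ Γ, φ (1, 0) = g ∧ φ (0, 1) = t := by
  let f : ZMod m →+ Γ := ZMod.lift m ⟨zmultiplesHom Γ g, hg⟩
  let f' : ZMod n →+ Γ := ZMod.lift n ⟨zmultiplesHom Γ t, ht⟩
  have hf : ∀ k : ℤ, f k = k • g := ZMod.lift_coe m _
  have hf' : ∀ k : ℤ, f' k = k • t := ZMod.lift_coe n _
  have comm : ∀ a b, AddCommute (f a) (f' b) := by
    intro a b
    obtain ⟨a, rfl⟩ := ZMod.intCast_surjective a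
    obtain ⟨b, rfl⟩ := ZMod.intCast_surjective b
    rw [hf, hf']
    exact hgt.zsmul_zsmul a b
  refine ⟨f.noncommCoprod f' comm, ?_, ?_⟩
  · simpa using hf 1
  · simpa using hf' 1

theorem exists_injective_zmod4_prod_zmod2 {g r : Γ} (hcomm : AddCommute g r) (hg0 : g ≠ 0)
    (hr0 : r ≠ 0) (h2g0 : g + g ≠ 0) (hgr : g ≠ r) (hgnr : g ≠ -r)
    (h1 : g + g + (r + r) = 0) (h2 : g + g - (r + r) = 0) :
    ∃ φ : ZMod 4 × ZMod 2 →+ Γ, Injective φ ∧ φ (1, 0) = g ∧ φ (1, 1) = r := by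
  have hrr : r + r = g + g := (sub_eq_zero.mp h2).symm
  have h4g : ((4 : ℕ) : ℤ) • g = 0 := by
    rw [show ((4 : ℕ) : ℤ) = 2 + 2 from rfl, add_zsmul, two_zsmul, ← h1, hrr]
  have h2t : ((2 : ℕ) : ℤ) • (-g + r) = 0 := by
    rw [show ((2 : ℕ) : ℤ) = 2 from rfl, two_zsmul, hcomm.neg_left.symm.add_add_add_comm, hrr,
      ← neg_add_rev, neg_add_cancel]
  obtain ⟨φ, hφg, hφt⟩ :=
    exists_addMonoidHom_zmod_prod ((AddCommute.refl g).neg_right.add_right hcomm) h4g h2t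
  have hφr : φ (1, 1) = r := by
    rw [show ((1, 1) : ZMod 4 × ZMod 2) = (1, 0) + (0, 1) from rfl, map_add, hφg, hφt,
      add_neg_cancel_left]
  have hcases : ∀ p : ZMod 4 × ZMod 2, p ≠ 0 → p = (1, 0) ∨ p = -(1, 0) ∨ p = (1, 0) + (1, 0) ∨
      p = (1, 1) ∨ p = -(1, 1) ∨ p = (1, 0) + (1, 1) ∨ p = -(1, 0) + (1, 1) := by
    decide
  refine ⟨φ, (injective_iff_map_eq_zero φ).2 fun p hp => ?_, hφg, hφr⟩
  by_contra hp0
  rcases hcases p hp0 with rfl | rfl | rfl | rfl | rfl | rfl | rfl <;>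
    simp only [map_add, map_neg, hφg, hφr, neg_eq_zero] at hp
  · exact hg0 hp
  · exact hg0 hp
  · exact h2g0 hp
  · exact hr0 hp
  · exact hr0 hp
  · exact hgnr (eq_neg_of_add_eq_zero_left hp)
  · exact hgr (neg_add_eq_zero.mp hp)

end Coordinates

theorem stmt_12_general {Γ : Type*} [AddGroup Γ] [Fintype Γ] (g r : Γ)
    (hg0 : g ≠ 0) (hr0 : r ≠ 0) (h2g0 : g + g ≠ 0)
    (hgr : g ≠ r) (hgnr : g ≠ -r) (hcomm : g + r = r + g)
    (h1 : g + g + (r + r) = 0) (h2 : g + g - (r + r) = 0)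
    (G : SimpleGraph Γ) (hX : cayleyGraph ({g, -g, r, -r} : Set Γ) ≤ G)
    (hreg : ∀ v : Γ, (G.neighborSet v).ncard = 5) :
    ∃ D : Set (Σ u : Γ, Σ v : Γ, G.Walk u v),
      (∀ T ∈ D, T.2.2.IsPath ∧ T.2.2.length = 5 ∧
        ∃ e ∈ G.edgeSet \ (cayleyGraph ({g, -g, r, -r} : Set Γ)).edgeSet,
          T.2.2.edges[2]? = some e) ∧
      ∀ e ∈ G.edgeSet, ∃! T, T ∈ D ∧ e ∈ T.2.2.edges := by
  obtain ⟨φ, hφ, hφg, hφr⟩ :=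
    exists_injective_zmod4_prod_zmod2 hcomm hg0 hr0 h2g0 hgr hgnr h1 h2
  have hS : ({g, -g, r, -r} : Set Γ) = φ '' (CenteredPaths.gens : Set (ZMod 4 × ZMod 2)) := by
    simp only [CenteredPaths.gens, Finset.coe_insert, Finset.coe_singleton, Set.image_insert_eq,
      Set.image_singleton, map_neg, hφg, hφr]
  let _ : AddAction (ZMod 4 × ZMod 2) Γ := AddAction.compHom Γ φ
  rw [hS] at hX ⊢
  exact CenteredPaths.exists_isCenteredP5Decomposition_of_free
    (fun u => (add_left_injective u).comp hφ)
    (fun u v => cayleyGraph_image_adj_iff hφ (by decide) (by decide)) hX hreg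

/-- Every 5-regular graph `G` that contains a spanning Cayley graph
`X(Γ, {g,-g,r,-r})`, where `{g,r}` is a simple commutative generator satisfying
`2g + 2r = 0` and `2g - 2r = 0`, admits an `M_{g,r}`-centered `P_5`-decomposition,
where `M_{g,r} = E(G) \ E(X)`. -/
theorem stmt_12 {Γ : Type*} [AddGroup Γ] [Fintype Γ] (g r : Γ)
    (hg0 : g ≠ 0) (hr0 : r ≠ 0) (h2g0 : g + g ≠ 0) (h2r0 : r + r ≠ 0)
    (hgr : g ≠ r) (hgnr : g ≠ -r) (hcomm : g + r = r + g)
    (h1 : g + g + (r + r) = 0) (h2 : g + g - (r + r) = 0)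
    (G : SimpleGraph Γ) (hX : cayleyGraph ({g, -g, r, -r} : Set Γ) ≤ G)
    (hreg : ∀ v : Γ, (G.neighborSet v).ncard = 5) :
    ∃ D : Set (Σ u : Γ, Σ v : Γ, G.Walk u v),
      (∀ T ∈ D, T.2.2.IsPath ∧ T.2.2.length = 5 ∧
        ∃ e ∈ G.edgeSet \ (cayleyGraph ({g, -g, r, -r} : Set Γ)).edgeSet,
          T.2.2.edges[2]? = some e) ∧
      ∀ e ∈ G.edgeSet, ∃! T, T ∈ D ∧ e ∈ T.2.2.edges :=
  stmt_12_general g r hg0 hr0 h2g0 hgr hgnr hcomm h1 h2 G hX hreg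
end
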